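/- arXiv:1909.06084 — 4 statements merged into one kernel-verified Lean document; each statement's English description precedes it below -/
import Mathlib

section
/- Let f : ℂ → ℂ be a polynomial (or rational map) of degree ≥ 2 and c a critical point of f lying in the Julia set J(f). Then there exists a constant C > 0 such that for every ε > 0 and every positive integer n, if f^n(D(c,ε)) ∩ D(c,ε) ≠ ∅, then n ≥ C · log(1/ε). -/
open Metric Filter Set

noncomputable section

set_option maxHeartbeats 1000000

/-- The Fatou set: points having a neighborhood on which the family of iterates
is equicontinuous (normal). -/
def FatouSet (f : ℂ → ℂ) : Set ℂ :=
  {z | ∃ U ∈ nhds z, EquicontinuousOn (fun n : ℕ => f^[n]) U}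

/-- The Julia set is the complement of the Fatou set. -/
def JuliaSet (f : ℂ → ℂ) : Set ℂ := (FatouSet f)ᶜ

open Polynomial in

/-- Escape radius: for a polynomial of degree ≥ 2, `‖q z‖ ≥ 2‖z‖` for `‖z‖` large. -/
lemma prz_escape (q : Polynomial ℂ) (hq : 2 ≤ q.natDegree) :
    ∃ R₀ : ℝ, 1 ≤ R₀ ∧ ∀ z : ℂ, R₀ ≤ ‖z‖ → 2 * ‖z‖ ≤ ‖q.eval z‖ := by
  have hq0 : q ≠ 0 := fun h => by simp [h] at hq
  set s := q /ₘ (X ^ 2) with hs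
  set r := q %ₘ (X ^ 2) with hr
  have hmono : (X ^ 2 : ℂ[X]).Monic := monic_X_pow 2
  have hsum : r + X ^ 2 * s = q := modByMonic_add_div q (X ^ 2)
  have hrdeg : r.degree < 2 := by
    simpa [hr] using degree_modByMonic_lt q hmono
  have hsne : s ≠ 0 := by
    intro h
    rw [h, mul_zero, add_zero] at hsum
    have : q.degree < 2 := hsum ▸ hrdeg
    have h2 : (2 : WithBot ℕ) ≤ q.degree := by
      rw [degree_eq_natDegree hq0]
      exact_mod_cast hq
    exact absurd (lt_of_le_of_lt h2 this) (lt_irrefl _)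
  obtain ⟨δ, hδpos, R₁, hR₁⟩ :
      ∃ δ > (0:ℝ), ∃ R₁ : ℝ, ∀ z : ℂ, R₁ ≤ ‖z‖ → δ ≤ ‖s.eval z‖ := by
    by_cases hdeg : 0 < s.degree
    · have ht : Tendsto (fun z : ℂ => ‖s.eval z‖) (comap norm atTop) atTop :=
        s.tendsto_norm_atTop hdeg tendsto_comap
      have := ht.eventually_ge_atTop 1
      rw [eventually_comap] at this
      rcases (eventually_atTop).1 this with ⟨R₁, hR₁⟩
      exact ⟨1, one_pos, R₁, fun z hz => hR₁ ‖z‖ hz z rfl⟩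
    · have hs0 : s = C (s.coeff 0) := eq_C_of_degree_le_zero (le_of_not_gt hdeg)
      have ha : s.coeff 0 ≠ 0 := by
        intro h; rw [h, map_zero] at hs0; exact hsne hs0
      refine ⟨‖s.coeff 0‖, norm_pos_iff.2 ha, 0, fun z _ => ?_⟩
      rw [hs0]; simp
  have hrdeg1 : r.degree ≤ 1 := by
    rcases lt_or_ge r.degree 2 with h | h
    · exact Order.le_of_lt_succ (by exact_mod_cast hrdeg)
    · exact absurd hrdeg (not_lt.2 h)
  have hreq : r = C (r.coeff 1) * X + C (r.coeff 0) := eq_X_add_C_of_degree_le_one hrdeg1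
  set a1 := r.coeff 1
  set a0 := r.coeff 0
  refine ⟨max (max R₁ 1) ((‖a0‖ + ‖a1‖ + 2) / δ), le_trans (le_max_right _ _) (le_max_left _ _),
    fun z hz => ?_⟩
  have hz1 : (1:ℝ) ≤ ‖z‖ := le_trans (le_trans (le_max_right _ _) (le_max_left _ _)) hz
  have hzR₁ : R₁ ≤ ‖z‖ := le_trans (le_trans (le_max_left _ _) (le_max_left _ _)) hz
  have hzδ : (‖a0‖ + ‖a1‖ + 2) / δ ≤ ‖z‖ := le_trans (le_max_right _ _) hz
  have hδz : ‖a0‖ + ‖a1‖ + 2 ≤ δ * ‖z‖ := by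
    rw [div_le_iff₀ hδpos] at hzδ; linarith [hzδ]
  have hqz : q.eval z = r.eval z + z ^ 2 * s.eval z := by
    conv_lhs => rw [← hsum]
    simp
  have hrz : ‖r.eval z‖ ≤ (‖a0‖ + ‖a1‖) * ‖z‖ := by
    rw [hreq]
    simp only [eval_add, eval_mul, eval_C, eval_X]
    calc ‖a1 * z + a0‖ ≤ ‖a1 * z‖ + ‖a0‖ := norm_add_le _ _
      _ = ‖a1‖ * ‖z‖ + ‖a0‖ := by rw [norm_mul]
      _ ≤ (‖a0‖ + ‖a1‖) * ‖z‖ := by nlinarith [norm_nonneg a0, norm_nonneg a1]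
  have hsz : δ * ‖z‖ ^ 2 ≤ ‖z ^ 2 * s.eval z‖ := by
    rw [norm_mul, norm_pow]
    have := hR₁ z hzR₁
    nlinarith [norm_nonneg z, sq_nonneg ‖z‖]
  have htri : ‖z ^ 2 * s.eval z‖ ≤ ‖q.eval z‖ + ‖r.eval z‖ := by
    calc ‖z ^ 2 * s.eval z‖ = ‖q.eval z - r.eval z‖ := by rw [hqz]; ring_nf
      _ ≤ ‖q.eval z‖ + ‖r.eval z‖ := norm_sub_le _ _
  nlinarith [norm_nonneg z, sq_nonneg ‖z‖]

open Polynomial in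
/-- Quadratic bound near a critical point. -/
lemma prz_quad (f : ℂ → ℂ) (q : Polynomial ℂ) (hfq : ∀ z, f z = q.eval z)
    (c : ℂ) (hc : deriv f c = 0) :
    ∃ M : ℝ, 1 ≤ M ∧ ∀ z : ℂ, ‖z - c‖ ≤ 1 → ‖f z - f c‖ ≤ M * ‖z - c‖ ^ 2 := by
  have hfeq : f = fun z => q.eval z := funext hfq
  set p := q.comp (X + C c) - C (q.eval c) with hp
  have hpev : ∀ w : ℂ, p.eval w = q.eval (w + c) - q.eval c := by
    intro w; simp [hp, eval_comp]
  have hderiv : q.derivative.eval c = 0 := by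
    rw [← Polynomial.deriv, ← hfeq, hc]
  have h0 : p.coeff 0 = 0 := by
    rw [coeff_zero_eq_eval_zero, hpev]
    simp
  have h1 : p.coeff 1 = 0 := by
    have hd : p.derivative = q.derivative.comp (X + C c) := by
      simp [hp, derivative_comp]
    have : p.derivative.coeff 0 = p.coeff 1 * 1 := by
      simpa using coeff_derivative p 0
    have h2 : p.derivative.eval 0 = q.derivative.eval c := by
      rw [hd]; simp [eval_comp]
    rw [← coeff_zero_eq_eval_zero, this, hderiv, mul_one] at h2
    exact h2
  have hdvd : X ^ 2 ∣ p := by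
    rw [X_pow_dvd_iff]
    intro d hd
    interval_cases d
    · exact h0
    · exact h1
  obtain ⟨u, hu⟩ := hdvd
  obtain ⟨M₀, hM₀⟩ := (isCompact_closedBall (0:ℂ) 1).exists_bound_of_continuousOn
    (Continuous.continuousOn (by continuity : Continuous fun w : ℂ => u.eval w))
  refine ⟨max M₀ 1, le_max_right _ _, fun z hz => ?_⟩
  have hfz : f z - f c = (z - c) ^ 2 * u.eval (z - c) := by
    rw [hfq z, hfq c]
    have : q.eval z - q.eval c = p.eval (z - c) := by rw [hpev]; ring_nf
    rw [this, hu]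
    simp
  rw [hfz, norm_mul, norm_pow]
  have hmem : (z - c) ∈ closedBall (0:ℂ) 1 := by
    simpa [Metric.mem_closedBall, dist_eq_norm] using hz
  have := hM₀ _ hmem
  have h2 : ‖u.eval (z - c)‖ ≤ max M₀ 1 := le_trans this (le_max_left _ _)
  have hnn : (0:ℝ) ≤ ‖z - c‖ ^ 2 := sq_nonneg _
  nlinarith
/-- Lipschitz bound on a closed ball. -/
lemma prz_lip (f : ℂ → ℂ) (q : Polynomial ℂ) (hfq : ∀ z, f z = q.eval z) (R : ℝ) :
    ∃ L : ℝ, 2 ≤ L ∧ ∀ z ∈ closedBall (0:ℂ) R, ∀ w ∈ closedBall (0:ℂ) R,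
      ‖f z - f w‖ ≤ L * ‖z - w‖ := by
  have hfeq : f = fun z => q.eval z := funext hfq
  obtain ⟨B, hB⟩ := (isCompact_closedBall (0:ℂ) R).exists_bound_of_continuousOn
    (Continuous.continuousOn (by continuity : Continuous fun w : ℂ => q.derivative.eval w))
  refine ⟨max B 2, le_max_right _ _, fun z hz w hw => ?_⟩
  have hdiff : ∀ x ∈ closedBall (0:ℂ) R, DifferentiableAt ℂ f x := by
    intro x _
    rw [hfeq]
    exact q.differentiable.differentiableAt
  have hbound : ∀ x ∈ closedBall (0:ℂ) R, ‖deriv f x‖ ≤ max B 2 := by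
    intro x hx
    have : deriv f x = q.derivative.eval x := by rw [hfeq, Polynomial.deriv]
    rw [this]
    exact le_trans (hB x hx) (le_max_left _ _)
  exact (convex_closedBall (0:ℂ) R).norm_image_sub_le_of_norm_deriv_le hdiff hbound hw hz

/-- Equicontinuity from a uniform Lipschitz bound. -/
lemma prz_equi {F : ℕ → ℂ → ℂ} {s : Set ℂ} {K : ℝ} (hK : 0 ≤ K)
    (h : ∀ i : ℕ, ∀ x ∈ s, ∀ y ∈ s, ‖F i x - F i y‖ ≤ K * ‖x - y‖) :
    EquicontinuousOn F s := by
  intro x hx U hU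
  rcases Metric.mem_uniformity_dist.1 hU with ⟨δ, hδ, hUδ⟩
  have hball : ∀ᶠ y in nhdsWithin x s, dist y x < δ / (K + 1) ∧ y ∈ s := by
    apply Filter.Eventually.and
    · have h1 : ∀ᶠ y in nhds x, dist y x < δ / (K + 1) :=
        eventually_of_mem (Metric.ball_mem_nhds x (by positivity)) (fun y hy => hy)
      exact h1.filter_mono nhdsWithin_le_nhds
    · exact eventually_mem_nhdsWithin
  filter_upwards [hball] with y hy i
  apply hUδ
  rw [dist_eq_norm]
  calc ‖F i x - F i y‖ ≤ K * ‖x - y‖ := h i x hx y hy.2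
    _ = K * dist y x := by rw [← dist_eq_norm, dist_comm]
    _ ≤ K * (δ / (K + 1)) := by
        apply mul_le_mul_of_nonneg_left (le_of_lt hy.1) hK
    _ < δ := by
        rw [mul_div_assoc']
        rw [div_lt_iff₀ (by linarith : (0:ℝ) < K + 1)]
        nlinarith

open Polynomial in
lemma prz_iter_cont (f : ℂ → ℂ) (q : Polynomial ℂ) (hfq : ∀ z, f z = q.eval z) (m : ℕ) :
    Differentiable ℂ (f^[m]) := by
  have hfd : Differentiable ℂ f := by
    have : f = fun z => q.eval z := funext hfq
    rw [this]; exact q.differentiable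
  induction m with
  | zero => simpa using differentiable_id
  | succ k ih =>
      rw [Function.iterate_succ']
      exact hfd.comp ih

/-- Case B: the orbit of `c` is unbounded — then small disks never return. -/
lemma prz_caseB (f : ℂ → ℂ) (q : Polynomial ℂ)
    (hq : 2 ≤ q.natDegree) (hfq : ∀ z, f z = q.eval z) (c : ℂ)
    (hub : ∀ R₁ : ℝ, ∃ k : ℕ, R₁ < ‖f^[k] c‖) :
    ∃ ε₀ : ℝ, 0 < ε₀ ∧ ε₀ ≤ 1/2 ∧ ∀ ε : ℝ, 0 < ε → ε < ε₀ → ∀ n : ℕ, 0 < n →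
      ∀ x ∈ ball c ε, f^[n] x ∉ ball c ε := by
  obtain ⟨R₀, hR₀1, hR₀⟩ := prz_escape q hq
  set T := max R₀ (‖c‖ + 2) with hT
  -- once past T, stays past T
  have hstay : ∀ (j : ℕ) (y : ℂ), T ≤ ‖y‖ → T ≤ ‖f^[j] y‖ := by
    intro j
    induction j with
    | zero => intro y hy; simpa using hy
    | succ k ih =>
        intro y hy
        rw [Function.iterate_succ_apply']
        have h1 : T ≤ ‖f^[k] y‖ := ih y hy
        have h2 : R₀ ≤ ‖f^[k] y‖ := le_trans (le_max_left _ _) h1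
        have h3 := hR₀ _ h2
        rw [hfq]
        nlinarith [le_max_left R₀ (‖c‖+2), hR₀1]
  obtain ⟨n₀, hn₀⟩ := hub (T + 1)
  have hn₀pos : 0 < n₀ := by
    rcases Nat.eq_zero_or_pos n₀ with h | h
    · exfalso; rw [h] at hn₀; simp only [Function.iterate_zero_apply] at hn₀
      have := le_max_right R₀ (‖c‖ + 2)
      linarith
    · exact h
  -- c is not periodic
  have hper : ∀ k : ℕ, 1 ≤ k → f^[k] c ≠ c := by
    intro k hk heq
    have hkpos : 0 < k := hk
    set B := (Finset.range k).sup' ⟨0, Finset.mem_range.2 hkpos⟩ (fun j => ‖f^[j] c‖) with hB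
    obtain ⟨m, hm⟩ := hub B
    have : f^[m] c = f^[m % k] c := by
      conv_lhs => rw [← Nat.mod_add_div m k]
      rw [Function.iterate_add_apply, Function.iterate_mul]
      rw [Function.iterate_fixed heq]
    rw [this] at hm
    have : ‖f^[m % k] c‖ ≤ B :=
      Finset.le_sup' (f := fun j => ‖f^[j] c‖) (Finset.mem_range.2 (Nat.mod_lt m hkpos))
    linarith
  -- min distance for early times
  obtain ⟨d, hdpos, hd⟩ :
      ∃ d : ℝ, 0 < d ∧ ∀ k : ℕ, 1 ≤ k → k < n₀ → d ≤ ‖f^[k] c - c‖ := by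
    by_cases h2 : n₀ ≤ 1
    · exact ⟨1, one_pos, fun k hk1 hk2 => absurd hk2 (by omega)⟩
    · have hne : (Finset.Ico 1 n₀).Nonempty := ⟨1, by rw [Finset.mem_Ico]; omega⟩
      obtain ⟨k₀, hk₀mem, hk₀min⟩ := Finset.exists_min_image (Finset.Ico 1 n₀)
        (fun k => ‖f^[k] c - c‖) hne
      rw [Finset.mem_Ico] at hk₀mem
      refine ⟨‖f^[k₀] c - c‖, ?_, fun k hk1 hk2 => ?_⟩
      · rw [norm_pos_iff, sub_ne_zero]
        exact hper k₀ hk₀mem.1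
      · exact hk₀min k (Finset.mem_Ico.2 ⟨hk1, hk2⟩)
  -- continuity radii
  have hcont : ∀ k : ℕ, ∃ δ : ℝ, 0 < δ ∧ ∀ x : ℂ, dist x c < δ →
      dist (f^[k] x) (f^[k] c) < min (d/2) 1 := by
    intro k
    have := (prz_iter_cont f q hfq k).continuous.continuousAt (x := c)
    rcases Metric.continuousAt_iff.1 this (min (d/2) 1) (by positivity) with ⟨δ, hδpos, hδ⟩
    exact ⟨δ, hδpos, fun x hx => hδ hx⟩
  choose δf hδfpos hδf using hcont
  set ε₂ := (Finset.range (n₀+1)).inf' ⟨0, Finset.mem_range.2 (by omega)⟩ δf with hε₂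
  have hε₂pos : 0 < ε₂ := by
    rw [hε₂]; refine (Finset.lt_inf'_iff ..).2 ?_
    intro i _
    exact hδfpos i
  refine ⟨min (min ε₂ (d/2)) (1/2), by positivity, le_trans (min_le_right _ _) le_rfl,
    fun ε hεpos hεlt n hn x hx hfx => ?_⟩
  have hεε₂ : ε < ε₂ := lt_of_lt_of_le hεlt (le_trans (min_le_left _ _) (min_le_left _ _))
  have hεd : ε < d/2 := lt_of_lt_of_le hεlt (le_trans (min_le_left _ _) (min_le_right _ _))
  have hεhalf : ε < 1/2 := lt_of_lt_of_le hεlt (min_le_right _ _)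
  rw [mem_ball, dist_eq_norm] at hfx hx
  rcases le_or_gt n₀ n with hcase | hcase
  · -- late time: iterate escaped
    have hδn₀ : ε₂ ≤ δf n₀ := Finset.inf'_le _ (Finset.mem_range.2 (by omega))
    have hxc : dist x c < δf n₀ := by
      rw [dist_eq_norm]; exact lt_of_lt_of_le (lt_of_lt_of_le hx (le_of_lt hεε₂)) hδn₀
    have h1 : dist (f^[n₀] x) (f^[n₀] c) < 1 :=
      lt_of_lt_of_le (hδf n₀ x hxc) (min_le_right _ _)
    have h2 : T + 1 < ‖f^[n₀] c‖ := hn₀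
    have h3 : T ≤ ‖f^[n₀] x‖ := by
      have := norm_sub_norm_le (f^[n₀] c) (f^[n₀] x)
      rw [← dist_eq_norm, dist_comm] at this
      linarith
    have h4 : T ≤ ‖f^[n] x‖ := by
      have heq : f^[n] x = f^[n - n₀] (f^[n₀] x) := by
        rw [← Function.iterate_add_apply, Nat.sub_add_cancel hcase]
      rw [heq]
      exact hstay _ _ h3
    have h5 : ‖c‖ + 2 ≤ T := le_max_right _ _
    have h6 := norm_sub_norm_le (f^[n] x) c
    have : ‖f^[n] x - c‖ ≥ 2 := by
      have := norm_sub_norm_le (f^[n] x) c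
      linarith
    linarith
  · -- early time: stays at distance ≥ d/2 from c
    have hδn : ε₂ ≤ δf n := Finset.inf'_le _ (Finset.mem_range.2 (by omega))
    have hxc : dist x c < δf n := by
      rw [dist_eq_norm]; exact lt_of_lt_of_le (lt_of_lt_of_le hx (le_of_lt hεε₂)) hδn
    have h1 : dist (f^[n] x) (f^[n] c) < d/2 :=
      lt_of_lt_of_le (hδf n x hxc) (min_le_left _ _)
    have h2 : d ≤ ‖f^[n] c - c‖ := hd n hn hcase
    have h3 : ‖f^[n] c - c‖ ≤ ‖f^[n] c - f^[n] x‖ + ‖f^[n] x - c‖ := by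
      have := norm_sub_le_norm_sub_add_norm_sub (f^[n] c) (f^[n] x) c
      linarith [norm_sub_le (f^[n] c - f^[n] x) (f^[n] x - c)]
    rw [dist_eq_norm, norm_sub_rev] at h1
    linarith

open Polynomial in
lemma prz_caseA (f : ℂ → ℂ) (q : Polynomial ℂ)
    (hq : 2 ≤ q.natDegree) (hfq : ∀ z, f z = q.eval z)
    (c : ℂ) (hc : deriv f c = 0) (hcJ : c ∈ JuliaSet f)
    (hbdd : ∃ R₁ : ℝ, ∀ k : ℕ, ‖f^[k] c‖ ≤ R₁) :
    ∃ C > (0 : ℝ), ∀ ε > (0 : ℝ), ∀ n : ℕ, 0 < n →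
      (f^[n] '' ball c ε ∩ ball c ε).Nonempty →
      C * Real.log (1 / ε) ≤ (n : ℝ) := by
  obtain ⟨R₁, hR₁⟩ := hbdd
  set R := max R₁ 0 + 1 with hR
  have hR1 : 1 ≤ R := by
    have := le_max_right R₁ 0; simp only [hR]; linarith
  have horb : ∀ k : ℕ, ‖f^[k] c‖ ≤ R - 1 := by
    intro k; have h1 := hR₁ k; have := le_max_left R₁ 0; simp only [hR]; linarith
  obtain ⟨L, hL2, hLip⟩ := prz_lip f q hfq R
  obtain ⟨M, hM1, hQuad⟩ := prz_quad f q hfq c hc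
  set ε₀ : ℝ := min ((1/(20*M))^2) (1/2) with hε₀
  have hε₀pos : 0 < ε₀ := by
    apply lt_min_iff.2; constructor
    · positivity
    · norm_num
  have hε₀half : ε₀ ≤ 1/2 := min_le_right _ _
  have hlogL : 0 < Real.log L := Real.log_pos (by linarith)
  have hinvε₀ : 1 < 1/ε₀ := by
    rw [lt_div_iff₀ hε₀pos]; linarith
  have hlogε₀ : 0 < Real.log (1/ε₀) := Real.log_pos hinvε₀
  set C : ℝ := min (1/(2*Real.log L)) (1/Real.log (1/ε₀)) with hC
  have hCpos : 0 < C := by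
    apply lt_min_iff.2; constructor <;> positivity
  refine ⟨C, hCpos, fun ε hεpos n hn hret => ?_⟩
  by_contra hcon
  push_neg at hcon
  obtain ⟨y, ⟨x₀, hx₀, rfl⟩, hy⟩ := hret
  have hn1 : (1:ℝ) ≤ (n:ℝ) := by exact_mod_cast hn
  -- ε < ε₀
  have hCε₀ : C * Real.log (1/ε₀) ≤ 1 := by
    calc C * Real.log (1/ε₀) ≤ (1/Real.log (1/ε₀)) * Real.log (1/ε₀) :=
          mul_le_mul_of_nonneg_right (min_le_right _ _) hlogε₀.le
      _ = 1 := by field_simp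
  have hlogs : Real.log (1/ε₀) < Real.log (1/ε) := by
    have h2 : C * Real.log (1/ε₀) < C * Real.log (1/ε) :=
      lt_of_le_of_lt (le_trans hCε₀ hn1) hcon
    exact lt_of_mul_lt_mul_left h2 hCpos.le
  have hεε₀ : ε < ε₀ := by
    have h1 : 1/ε₀ < 1/ε := by
      exact (Real.log_lt_log_iff (by positivity) (by positivity)).1 hlogs
    have h2 : (0:ℝ) < 1/ε := lt_trans (by positivity) h1
    rw [div_lt_div_iff₀ hε₀pos hεpos] at h1
    linarith
  have hεhalf : ε ≤ 1/2 := le_of_lt (lt_of_lt_of_le hεε₀ hε₀half)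
  have hεM : ε < (1/(20*M))^2 := lt_of_lt_of_le hεε₀ (min_le_left _ _)
  have hlogεpos : 0 < Real.log (1/ε) := lt_trans hlogε₀ hlogs
  -- E = sqrt(1/ε)
  set E : ℝ := Real.exp ((1/2) * Real.log (1/ε)) with hE
  have hEpos : 0 < E := Real.exp_pos _
  have hEE : E * E = 1/ε := by
    rw [hE, ← Real.exp_add]
    have : (1/2) * Real.log (1/ε) + (1/2) * Real.log (1/ε) = Real.log (1/ε) := by ring
    rw [this, Real.exp_log (by positivity)]
  have hEEε : E * E * ε = 1 := by rw [hEE]; field_simp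
  have hLn : (L:ℝ)^n ≤ E := by
    have hCL : C ≤ 1/(2*Real.log L) := min_le_left _ _
    have h1 : (n:ℝ) * Real.log L < (1/2) * Real.log (1/ε) := by
      have h2 : (n:ℝ) < (1/(2*Real.log L)) * Real.log (1/ε) :=
        lt_of_lt_of_le hcon (mul_le_mul_of_nonneg_right hCL hlogεpos.le)
      have h3 := mul_lt_mul_of_pos_right h2 hlogL
      calc (n:ℝ) * Real.log L < ((1/(2*Real.log L)) * Real.log (1/ε)) * Real.log L := h3
        _ = (1/2) * Real.log (1/ε) := by field_simp
    have h4 : L^n = Real.exp ((n:ℝ) * Real.log L) := by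
      rw [Real.exp_nat_mul, Real.exp_log (by linarith : (0:ℝ) < L)]
    rw [h4, hE]
    exact le_of_lt (Real.exp_lt_exp.2 h1)
  have h20M : 20*M ≤ E := by
    have h1 : (20*M)^2 * ε < 1 := by
      have h2 : (0:ℝ) < (20*M)^2 := by positivity
      have := mul_lt_mul_of_pos_left hεM h2
      calc (20*M)^2 * ε < (20*M)^2 * (1/(20*M))^2 := this
        _ = 1 := by field_simp
    nlinarith
  have hpow : ∀ j : ℕ, j ≤ n → (L:ℝ)^j * (4*M*ε^2) ≤ ε/5 := by
    intro j hj
    have h1 : (L:ℝ)^j ≤ L^n := pow_le_pow_right₀ (by linarith) hj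
    have h2 : (L:ℝ)^j ≤ E := le_trans h1 hLn
    have h3 : (0:ℝ) ≤ 4*M*ε^2 := by positivity
    have h4 : (L:ℝ)^j * (4*M*ε^2) ≤ E * (4*M*ε^2) := mul_le_mul_of_nonneg_right h2 h3
    have h5 : E * (4*M*ε^2) ≤ ε/5 := by nlinarith [mul_pos hEpos hεpos]
    linarith
  -- main induction
  have claim : ∀ j : ℕ, j + 1 ≤ n → ∀ x ∈ closedBall c (2*ε),
      ‖f^[j+1] x - f^[j+1] c‖ ≤ L^j * (4*M*ε^2) := by
    intro j
    induction j with
    | zero =>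
        intro _ x hx
        rw [mem_closedBall, dist_eq_norm] at hx
        have h1 : ‖x - c‖ ≤ 1 := by linarith
        have h2 := hQuad x h1
        have h3 : ‖x - c‖^2 ≤ (2*ε)^2 := by
          have := pow_le_pow_left₀ (norm_nonneg (x - c)) hx 2
          simpa using this
        have h4 : M * ‖x - c‖^2 ≤ M * (2*ε)^2 :=
          mul_le_mul_of_nonneg_left h3 (by linarith)
        simp only [Function.iterate_one, pow_zero, one_mul]
        calc ‖f x - f c‖ ≤ M * ‖x - c‖^2 := h2
          _ ≤ M * (2*ε)^2 := h4
          _ = 4*M*ε^2 := by ring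
    | succ j ih =>
        intro hj1 x hx
        have hprev := ih (by omega) x hx
        have hjn : j ≤ n := by omega
        have hsmall : ‖f^[j+1] x - f^[j+1] c‖ ≤ ε/5 := le_trans hprev (hpow j hjn)
        have hmemc : f^[j+1] c ∈ closedBall (0:ℂ) R := by
          rw [mem_closedBall, dist_zero_right]
          linarith [horb (j+1)]
        have hmemx : f^[j+1] x ∈ closedBall (0:ℂ) R := by
          rw [mem_closedBall, dist_zero_right]
          have := norm_le_norm_add_norm_sub' (f^[j+1] x) (f^[j+1] c)
          have h6 := norm_sub_norm_le (f^[j+1] x) (f^[j+1] c)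
          linarith [horb (j+1)]
        have hlip := hLip _ hmemx _ hmemc
        rw [Function.iterate_succ_apply', Function.iterate_succ_apply' f (j+1) c]
        calc ‖f (f^[j+1] x) - f (f^[j+1] c)‖ ≤ L * ‖f^[j+1] x - f^[j+1] c‖ := hlip
          _ ≤ L * (L^j * (4*M*ε^2)) :=
              mul_le_mul_of_nonneg_left hprev (by linarith)
          _ = L^(j+1) * (4*M*ε^2) := by ring
  have cor : ∀ k : ℕ, 1 ≤ k → k ≤ n → ∀ x ∈ closedBall c (2*ε),
      ‖f^[k] x - f^[k] c‖ ≤ ε/5 := by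
    intro k hk1 hkn x hx
    obtain ⟨j, rfl⟩ : ∃ j, k = j + 1 := ⟨k - 1, by omega⟩
    exact le_trans (claim j hkn x hx) (hpow j (by omega))
  have hx₀cb : x₀ ∈ closedBall c (2*ε) := by
    rw [mem_ball] at hx₀
    rw [mem_closedBall]
    linarith
  have hyn : ‖f^[n] x₀ - c‖ < ε := by rwa [mem_ball, dist_eq_norm] at hy
  have hreturn : ‖f^[n] c - c‖ ≤ ε + ε/5 := by
    have h1 := cor n (by omega) le_rfl x₀ hx₀cb
    have h2 : ‖f^[n] c - c‖ ≤ ‖f^[n] c - f^[n] x₀‖ + ‖f^[n] x₀ - c‖ := by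
      have := norm_add_le (f^[n] c - f^[n] x₀) (f^[n] x₀ - c)
      simpa using this
    rw [norm_sub_rev] at h1
    linarith
  have hmaps : MapsTo f^[n] (closedBall c (2*ε)) (closedBall c (2*ε)) := by
    intro x hx
    rw [mem_closedBall, dist_eq_norm]
    have h1 := cor n (by omega) le_rfl x hx
    have h2 : ‖f^[n] x - c‖ ≤ ‖f^[n] x - f^[n] c‖ + ‖f^[n] c - c‖ := by
      have := norm_add_le (f^[n] x - f^[n] c) (f^[n] c - c)
      simpa using this
    linarith
  have hbound : ∀ m : ℕ, ∀ x ∈ closedBall c (2*ε), ‖f^[m] x‖ ≤ R := by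
    intro m x hx
    have hiter : f^[m] x = f^[m % n] ((f^[n])^[m / n] x) := by
      rw [← Function.iterate_mul, ← Function.iterate_add_apply, Nat.mod_add_div]
    have hmem : (f^[n])^[m / n] x ∈ closedBall c (2*ε) := hmaps.iterate (m / n) hx
    set y := (f^[n])^[m / n] x with hydef
    rw [hiter]
    rcases Nat.eq_zero_or_pos (m % n) with h0 | hpos
    · rw [h0, Function.iterate_zero_apply]
      rw [mem_closedBall, dist_eq_norm] at hmem
      have h1 : ‖y‖ ≤ ‖y - c‖ + ‖c‖ := by
        have := norm_add_le (y - c) c; simpa using this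
      have h2 := horb 0
      simp only [Function.iterate_zero_apply] at h2
      linarith
    · have hklt : m % n < n := Nat.mod_lt m hn
      have h1 := cor (m % n) hpos (le_of_lt hklt) y hmem
      have h2 := horb (m % n)
      have h3 : ‖f^[m % n] y‖ ≤ ‖f^[m % n] y - f^[m % n] c‖ + ‖f^[m % n] c‖ := by
        have := norm_add_le (f^[m % n] y - f^[m % n] c) (f^[m % n] c)
        simpa using this
      linarith
  -- Schwarz estimate
  set K : ℝ := (2*R+1)/ε with hKdef
  have hKpos : 0 < K := by positivity
  have hderb : ∀ m : ℕ, ∀ z ∈ ball c ε, ‖deriv (f^[m]) z‖ ≤ K := by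
    intro m z hz
    rw [mem_ball, dist_eq_norm] at hz
    have hsub : ball z ε ⊆ closedBall c (2*ε) := by
      intro w hw
      rw [mem_ball, dist_eq_norm] at hw
      rw [mem_closedBall, dist_eq_norm]
      have : ‖w - c‖ ≤ ‖w - z‖ + ‖z - c‖ := by
        have := norm_add_le (w - z) (z - c); simpa using this
      linarith
    have hzcb : z ∈ closedBall c (2*ε) := by
      rw [mem_closedBall, dist_eq_norm]; linarith
    have hmapsz : MapsTo f^[m] (ball z ε) (ball (f^[m] z) (2*R+1)) := by
      intro w hw
      rw [mem_ball, dist_eq_norm]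
      have h1 := hbound m w (hsub hw)
      have h2 := hbound m z hzcb
      have : ‖f^[m] w - f^[m] z‖ ≤ ‖f^[m] w‖ + ‖f^[m] z‖ := norm_sub_le _ _
      linarith
    have := Complex.norm_deriv_le_div_of_mapsTo_ball
      ((prz_iter_cont f q hfq m).differentiableOn) (hmapsz.mono_right ball_subset_closedBall) hεpos
    rwa [hKdef]
  have hlips : ∀ m : ℕ, ∀ x ∈ ball c ε, ∀ y ∈ ball c ε,
      ‖f^[m] x - f^[m] y‖ ≤ K * ‖x - y‖ := by
    intro m x hx y hy
    exact (convex_ball c ε).norm_image_sub_le_of_norm_deriv_le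
      (fun w _ => (prz_iter_cont f q hfq m).differentiableAt) (hderb m) hy hx
  have hequi : EquicontinuousOn (fun m : ℕ => f^[m]) (ball c ε) :=
    prz_equi hKpos.le hlips
  exact hcJ ⟨ball c ε, ball_mem_nhds c hεpos, hequi⟩

/-- **Przytycki's lemma.** Let `f` be a polynomial of degree ≥ 2 and `c`
a critical point of `f` lying in the Julia set. Then there is `C > 0` such that for
every `ε > 0` and every positive integer `n`, if `f^n(D(c,ε)) ∩ D(c,ε) ≠ ∅`
then `n ≥ C·log(1/ε)`. -/
theorem przytycki_return_time (f : ℂ → ℂ) (q : Polynomial ℂ)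
    (hq : 2 ≤ q.natDegree) (hfq : ∀ z, f z = q.eval z)
    (c : ℂ) (hc : deriv f c = 0) (hcJ : c ∈ JuliaSet f) :
    ∃ C > (0 : ℝ), ∀ ε > (0 : ℝ), ∀ n : ℕ, 0 < n →
      (f^[n] '' ball c ε ∩ ball c ε).Nonempty →
      C * Real.log (1 / ε) ≤ (n : ℝ) := by
  by_cases hbdd : ∃ R₁ : ℝ, ∀ k : ℕ, ‖f^[k] c‖ ≤ R₁
  · exact prz_caseA f q hq hfq c hc hcJ hbdd
  · push_neg at hbdd
    obtain ⟨ε₀, hε₀pos, hε₀half, hnoret⟩ := prz_caseB f q hq hfq c hbdd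
    have hinv : 1 < 1/ε₀ := by rw [lt_div_iff₀ hε₀pos]; linarith
    have hlog : 0 < Real.log (1/ε₀) := Real.log_pos hinv
    refine ⟨1/Real.log (1/ε₀), by positivity, fun ε hε n hn hret => ?_⟩
    rcases lt_or_ge ε ε₀ with hcase | hcase
    · exfalso
      obtain ⟨y, ⟨x, hx, rfl⟩, hy⟩ := hret
      exact hnoret ε hε hcase n hn x hx hy
    · have h1 : 1/ε ≤ 1/ε₀ := one_div_le_one_div_of_le hε₀pos hcase
      have h2 : Real.log (1/ε) ≤ Real.log (1/ε₀) :=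
        Real.log_le_log (by positivity) h1
      have h3 : (1:ℝ) ≤ (n:ℝ) := by exact_mod_cast hn
      calc (1/Real.log (1/ε₀)) * Real.log (1/ε)
          ≤ (1/Real.log (1/ε₀)) * Real.log (1/ε₀) :=
            mul_le_mul_of_nonneg_left h2 (by positivity)
        _ = 1 := by field_simp
        _ ≤ (n:ℝ) := h3
end
end

section
/- Pliss's Lemma: let A ≥ c₂ > c₁ > 0 and let b₁,…,b_N be real numbers with b_i ≤ A for all i and ∑_{i=1}^N b_i ≥ c₂ N. Then there exist l ≥ θ N indices 1 ≤ n₁ < … < n_l ≤ N, with θ = (c₂ - c₁)/(A - c₁), such that for each j and every 0 ≤ m < n_j we have ∑_{i=m+1}^{n_j} b_i ≥ c₁ (n_j - m). -/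
open Finset

noncomputable def plissMax (T : ℕ → ℝ) : ℕ → ℝ
  | 0 => T 0
  | n + 1 => max (plissMax T n) (T (n + 1))

lemma le_plissMax (T : ℕ → ℝ) : ∀ n m, m ≤ n → T m ≤ plissMax T n := by
  intro n
  induction n with
  | zero => intro m hm; interval_cases m; simp [plissMax]
  | succ k ih =>
    intro m hm
    rcases Nat.lt_succ_iff_lt_or_eq.mp (Nat.lt_succ_of_le hm) with h | h
    · exact le_trans (ih m (Nat.lt_succ_iff.mp h)) (le_max_left _ _)
    · subst h; exact le_max_right _ _

/-- **Pliss's Lemma.** Let `A ≥ c₂ > c₁ > 0` and `b₁,…,b_N` reals with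
`b_i ≤ A` and `∑_{i=1}^N b_i ≥ c₂ N`. Then with `θ = (c₂-c₁)/(A-c₁)` there exist at
least `θN` indices `1 ≤ n₁ < … < n_l ≤ N` such that for each such `n` and every
`0 ≤ m < n`, `∑_{i=m+1}^{n} b_i ≥ c₁ (n - m)`. -/
theorem pliss_lemma (A c₁ c₂ : ℝ) (hc₁ : 0 < c₁) (hc₁₂ : c₁ < c₂) (hc₂A : c₂ ≤ A)
    (N : ℕ) (b : ℕ → ℝ) (hb : ∀ i ∈ Finset.Icc 1 N, b i ≤ A)
    (hsum : c₂ * N ≤ ∑ i ∈ Finset.Icc 1 N, b i) :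
    ∃ S : Finset ℕ, S ⊆ Finset.Icc 1 N ∧
      ((c₂ - c₁) / (A - c₁)) * N ≤ (S.card : ℝ) ∧
      ∀ n ∈ S, ∀ m < n, c₁ * ((n : ℝ) - m) ≤ ∑ i ∈ Finset.Icc (m + 1) n, b i := by
  classical
  set K := A - c₁ with hKdef
  have hK0 : 0 < K := by rw [hKdef]; linarith
  set T : ℕ → ℝ := fun n => ∑ i ∈ Finset.Ioc 0 n, (b i - c₁) with hTdef
  set P : ℕ → Prop := fun n => ∀ m < n, T m ≤ T n with hPdef
  refine ⟨(Finset.Icc 1 N).filter P, Finset.filter_subset _ _, ?_, ?_⟩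
  · -- cardinality bound
    have hstep : ∀ n, T (n + 1) = T n + (b (n + 1) - c₁) := by
      intro n
      simp only [hTdef]
      rw [Finset.sum_Ioc_succ_top (Nat.zero_le n)]
    have key : ∀ n, n ≤ N →
        plissMax T n ≤ (((Finset.Icc 1 n).filter P).card : ℝ) * K := by
      intro n
      induction n with
      | zero => intro _; simp [plissMax, hTdef]
      | succ k ih =>
        intro hk
        have hk' : k ≤ N := Nat.le_of_succ_le hk
        have ihk := ih hk'
        have hnotmem : k + 1 ∉ (Finset.Icc 1 k).filter P := by
          intro h
          have := Finset.mem_Icc.mp (Finset.mem_of_mem_filter _ h)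
          omega
        have hIcc : Finset.Icc 1 (k + 1) = insert (k + 1) (Finset.Icc 1 k) := by
          ext x; simp [Finset.mem_Icc]; omega
        by_cases hP : P (k + 1)
        · have hcard : ((Finset.Icc 1 (k + 1)).filter P).card
              = ((Finset.Icc 1 k).filter P).card + 1 := by
            rw [hIcc, Finset.filter_insert, if_pos hP,
              Finset.card_insert_of_notMem hnotmem]
          have hbA : b (k + 1) ≤ A := hb _ (Finset.mem_Icc.mpr ⟨by omega, hk⟩)
          have hT1 : T (k + 1) ≤ plissMax T k + K := by
            rw [hstep k, hKdef]; have := le_plissMax T k k le_rfl; linarith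
          have : plissMax T (k + 1) ≤ plissMax T k + K := by
            simp only [plissMax]
            exact max_le (by linarith [hK0]) hT1
          rw [hcard]; push_cast; linarith
        · have hcard : ((Finset.Icc 1 (k + 1)).filter P).card
              = ((Finset.Icc 1 k).filter P).card := by
            rw [hIcc, Finset.filter_insert, if_neg hP]
          simp only [hPdef, not_forall] at hP
          obtain ⟨m, hm, hTm⟩ := hP
          have hTm' : T m ≤ plissMax T k := le_plissMax T k m (Nat.lt_succ_iff.mp hm)
          have : plissMax T (k + 1) ≤ plissMax T k := by
            simp only [plissMax]
            exact max_le le_rfl (by push_neg at hTm; linarith)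
          rw [hcard]; linarith
    have hTN : (c₂ - c₁) * N ≤ T N := by
      have hIoc : Finset.Icc 1 N = Finset.Ioc 0 N := by
        rw [← Finset.Icc_add_one_left_eq_Ioc, zero_add]
      have : T N = (∑ i ∈ Finset.Icc 1 N, b i) - c₁ * N := by
        rw [hTdef]
        simp only [Finset.sum_sub_distrib, Finset.sum_const, Nat.card_Ioc,
          Nat.sub_zero, nsmul_eq_mul, hIoc]
        ring
      rw [this]; linarith
    have h1 : T N ≤ plissMax T N := le_plissMax T N N le_rfl
    have h2 := key N le_rfl
    rw [div_mul_eq_mul_div, div_le_iff₀ hK0]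
    calc (c₂ - c₁) * N ≤ T N := hTN
      _ ≤ _ := by linarith
  · intro n hn m hm
    obtain ⟨hn1, hPn⟩ := Finset.mem_filter.mp hn
    have hTmn : T m ≤ T n := hPn m hm
    have hsplit : T m + ∑ i ∈ Finset.Ioc m n, (b i - c₁) = T n := by
      rw [hTdef]
      exact Finset.sum_Ioc_consecutive _ (Nat.zero_le m) hm.le
    have hcard : ((Finset.Ioc m n).card : ℝ) = (n : ℝ) - m := by
      rw [Nat.card_Ioc, Nat.cast_sub hm.le]
    have : ∑ i ∈ Finset.Ioc m n, (b i - c₁)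
        = (∑ i ∈ Finset.Ioc m n, b i) - ((n : ℝ) - m) * c₁ := by
      rw [Finset.sum_sub_distrib, Finset.sum_const, nsmul_eq_mul, hcard]
    have hIcc : Finset.Icc (m + 1) n = Finset.Ioc m n := Finset.Icc_add_one_left_eq_Ioc m n
    rw [hIcc]
    linarith
end

section
/- Fix C, K > 0. For a sequence of nonnegative reals (φ_j)_{j≥0} with ∑_{j=0}^{n-1} φ_j ≤ Cn for all n, define the shadow of j as the interval S(j,K) := (j, j + K φ_j], and for N ∈ ℕ let A(N,K) be the set of positive integers n covered by at most N shadows S(j,K). Then for all sufficiently large n, #(A(N,K) ∩ {1,…,n}) / n ≥ 1 − CK/(N+1). -/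
open Filter Set

/-- Auxiliary counting lemma: if each column `j < n` covers at most `c`-in-total
rows of `Icc 1 n` (summed), then rows covered more than `N` times have density
at most `c/(N+1)`. -/
lemma shadow_density_aux (N n : ℕ) (hn : 1 ≤ n) (c : ℝ)
    (P : ℕ → ℕ → Prop) [∀ m j, Decidable (P m j)]
    (hlow : ∀ m j, P m j → j < m)
    (hbound : ∑ j ∈ Finset.range n,
        (((Finset.Icc 1 n).filter (fun m => P m j)).card : ℝ) ≤ c * n) :
    1 - c / (N + 1) ≤
      (({m : ℕ | m ∈ Finset.Icc 1 n ∧ {j : ℕ | P m j}.ncard ≤ N}.ncard : ℝ)) / n := by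
  classical
  set Afin : Finset ℕ :=
    (Finset.Icc 1 n).filter (fun m => ((Finset.range n).filter (P m)).card ≤ N) with hAfin
  set Bfin : Finset ℕ :=
    (Finset.Icc 1 n).filter (fun m => ¬ ((Finset.range n).filter (P m)).card ≤ N) with hBfin
  have hcnt : ∀ m ∈ Finset.Icc 1 n,
      {j : ℕ | P m j}.ncard = ((Finset.range n).filter (P m)).card := by
    intro m hm
    rw [← Set.ncard_coe_finset]
    congr 1
    ext j
    simp only [Finset.coe_filter, Finset.mem_range, Set.mem_setOf_eq]
    constructor
    · intro hj
      have hjm : j < m := hlow m j hj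
      have hmn : m ≤ n := (Finset.mem_Icc.mp hm).2
      exact ⟨by omega, hj⟩
    · exact fun h => h.2
  have hAset : {m : ℕ | m ∈ Finset.Icc 1 n ∧ {j : ℕ | P m j}.ncard ≤ N} = ↑Afin := by
    ext m
    simp only [Set.mem_setOf_eq, hAfin, Finset.coe_filter]
    constructor
    · rintro ⟨hm, h⟩
      refine ⟨hm, ?_⟩
      rwa [← hcnt m hm]
    · rintro ⟨hm, h⟩
      exact ⟨hm, by rwa [hcnt m hm]⟩
  have hAncard : {m : ℕ | m ∈ Finset.Icc 1 n ∧ {j : ℕ | P m j}.ncard ≤ N}.ncard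
      = Afin.card := by rw [hAset, Set.ncard_coe_finset]
  -- double counting
  have swap : ∑ m ∈ Finset.Icc 1 n, ((Finset.range n).filter (P m)).card
      = ∑ j ∈ Finset.range n, ((Finset.Icc 1 n).filter (fun m => P m j)).card := by
    simp_rw [Finset.card_filter]
    exact Finset.sum_comm
  have htotal : ∑ m ∈ Finset.Icc 1 n, (((Finset.range n).filter (P m)).card : ℝ)
      ≤ c * n := by
    calc ∑ m ∈ Finset.Icc 1 n, (((Finset.range n).filter (P m)).card : ℝ)
        = ((∑ m ∈ Finset.Icc 1 n, ((Finset.range n).filter (P m)).card : ℕ) : ℝ) := by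
          push_cast; ring
      _ = ((∑ j ∈ Finset.range n,
            ((Finset.Icc 1 n).filter (fun m => P m j)).card : ℕ) : ℝ) := by rw [swap]
      _ = ∑ j ∈ Finset.range n,
            (((Finset.Icc 1 n).filter (fun m => P m j)).card : ℝ) := by push_cast; ring
      _ ≤ c * n := hbound
  have hNpos : (0 : ℝ) < (N : ℝ) + 1 := by positivity
  have hn0 : (0 : ℝ) < (n : ℝ) := by exact_mod_cast hn
  -- bound on the bad set
  have hBkey : (Bfin.card : ℝ) * ((N : ℝ) + 1) ≤ c * n := by
    have h1 : Bfin.card • ((N : ℝ) + 1)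
        ≤ ∑ m ∈ Bfin, (((Finset.range n).filter (P m)).card : ℝ) := by
      apply Finset.card_nsmul_le_sum
      intro m hm
      have := (Finset.mem_filter.mp hm).2
      have : N + 1 ≤ ((Finset.range n).filter (P m)).card := by omega
      exact_mod_cast this
    have h2 : ∑ m ∈ Bfin, (((Finset.range n).filter (P m)).card : ℝ)
        ≤ ∑ m ∈ Finset.Icc 1 n, (((Finset.range n).filter (P m)).card : ℝ) := by
      apply Finset.sum_le_sum_of_subset_of_nonneg (Finset.filter_subset _ _)
      intro m _ _
      positivity
    rw [nsmul_eq_mul] at h1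
    linarith
  have hcard : Afin.card + Bfin.card = n := by
    rw [hAfin, hBfin, Finset.card_filter_add_card_filter_not, Nat.card_Icc]
    omega
  have hA : (Afin.card : ℝ) = n - Bfin.card := by
    have : ((Afin.card + Bfin.card : ℕ) : ℝ) = n := by exact_mod_cast congrArg Nat.cast hcard
    push_cast at this
    linarith
  have hBle : (Bfin.card : ℝ) ≤ c / ((N : ℝ) + 1) * n := by
    rw [div_mul_eq_mul_div, le_div_iff₀ hNpos]
    linarith
  rw [hAncard, le_div_iff₀ hn0, hA]
  linarith

/-- **shadow density lemma.** Fix `C, K > 0` and nonnegative reals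
`(φ_j)` with `∑_{j<n} φ_j ≤ Cn` for all `n`. The shadow of `j` is
`S(j,K) = (j, j + Kφ_j]`, and `A(N,K)` is the set of positive integers covered by at
most `N` shadows. Then for all large `n`,
`#(A(N,K) ∩ {1,…,n}) / n ≥ 1 − CK/(N+1)`. -/
theorem shadow_density_lemma (C K : ℝ) (hC : 0 < C) (hK : 0 < K)
    (φ : ℕ → ℝ) (hφ : ∀ j, 0 ≤ φ j)
    (hsum : ∀ n : ℕ, ∑ j ∈ Finset.range n, φ j ≤ C * n) (N : ℕ) :
    ∀ᶠ n : ℕ in atTop,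
      1 - C * K / (N + 1) ≤
        (({m : ℕ | m ∈ Finset.Icc 1 n ∧
            {j : ℕ | (j : ℝ) < m ∧ (m : ℝ) ≤ (j : ℝ) + K * φ j}.ncard ≤ N}.ncard : ℝ))
          / n := by
  classical
  filter_upwards [eventually_ge_atTop 1] with n hn
  have hlow : ∀ m j : ℕ, ((j : ℝ) < m ∧ (m : ℝ) ≤ (j : ℝ) + K * φ j) → j < m := by
    intro m j h
    exact_mod_cast h.1
  have hbound : ∑ j ∈ Finset.range n,
      (((Finset.Icc 1 n).filter
        (fun m : ℕ => (j : ℝ) < m ∧ (m : ℝ) ≤ (j : ℝ) + K * φ j)).card : ℝ) ≤ C * K * n := by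
    have hcol : ∀ j ∈ Finset.range n,
        (((Finset.Icc 1 n).filter
          (fun m : ℕ => (j : ℝ) < m ∧ (m : ℝ) ≤ (j : ℝ) + K * φ j)).card : ℝ) ≤ K * φ j := by
      intro j _
      have hsub : (Finset.Icc 1 n).filter
          (fun m : ℕ => (j : ℝ) < m ∧ (m : ℝ) ≤ (j : ℝ) + K * φ j)
          ⊆ Finset.Icc (j + 1) (j + ⌊K * φ j⌋₊) := by
        intro m hm
        simp only [Finset.mem_filter, Finset.mem_Icc] at hm ⊢
        obtain ⟨⟨h1, h2⟩, hjm, hmle⟩ := hm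
        have hjm' : j < m := by exact_mod_cast hjm
        have hsubcast : ((m - j : ℕ) : ℝ) ≤ K * φ j := by
          rw [Nat.cast_sub hjm'.le]
          linarith
        have hfloor : m - j ≤ ⌊K * φ j⌋₊ := Nat.le_floor hsubcast
        omega
      calc (((Finset.Icc 1 n).filter
            (fun m : ℕ => (j : ℝ) < m ∧ (m : ℝ) ≤ (j : ℝ) + K * φ j)).card : ℝ)
          ≤ ((Finset.Icc (j + 1) (j + ⌊K * φ j⌋₊)).card : ℝ) := by
            exact_mod_cast Finset.card_le_card hsub
        _ = (⌊K * φ j⌋₊ : ℝ) := by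
            have : (Finset.Icc (j + 1) (j + ⌊K * φ j⌋₊)).card = ⌊K * φ j⌋₊ := by
              rw [Nat.card_Icc]; omega
            exact_mod_cast this
        _ ≤ K * φ j := Nat.floor_le (mul_nonneg hK.le (hφ j))
    calc ∑ j ∈ Finset.range n,
          (((Finset.Icc 1 n).filter
            (fun m : ℕ => (j : ℝ) < m ∧ (m : ℝ) ≤ (j : ℝ) + K * φ j)).card : ℝ)
        ≤ ∑ j ∈ Finset.range n, K * φ j := Finset.sum_le_sum hcol
      _ = K * ∑ j ∈ Finset.range n, φ j := by rw [Finset.mul_sum]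
      _ ≤ K * (C * n) := by
          exact mul_le_mul_of_nonneg_left (hsum n) hK.le
      _ = C * K * n := by ring
  exact shadow_density_aux N n hn (C * K)
    (fun m j => (j : ℝ) < m ∧ (m : ℝ) ≤ (j : ℝ) + K * φ j) hlow hbound
end

section
/- Let ω be a Borel probability measure on ℂ for which there exist C > 0 and α > 0 with ω(D(0,r)) ≤ C r^α for all r > 0. Suppose (x_i)_{i≥0} is a sequence that is ω-typical in the sense that for every continuous compactly-supported F: ℂ → ℝ, (1/n) ∑_{i<n} F(x_i) → ∫ F dω. Then lim_{δ→0} limsup_{n→∞} ((−log δ)/n) · #{0 ≤ i < n : |x_i| ≤ δ} = 0. -/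
open Metric Filter Set MeasureTheory

open scoped Classical

/-- Let `ω` be a Borel probability measure on `ℂ` with
`ω(D(0,r)) ≤ C r^α`, and let `(x_i)` be an `ω`-typical sequence: Birkhoff averages of
every continuous compactly supported function converge to its `ω`-integral. Then
`lim_{δ→0} limsup_{n→∞} ((−log δ)/n) · #{i < n : |x_i| ≤ δ} = 0`. -/
theorem typical_sequence_log_visits (ω : Measure ℂ) [IsProbabilityMeasure ω]
    (C α : ℝ) (hC : 0 < C) (hα : 0 < α)
    (hHolder : ∀ r > (0 : ℝ), ω (ball (0 : ℂ) r) ≤ ENNReal.ofReal (C * r ^ α))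
    (x : ℕ → ℂ)
    (htyp : ∀ F : ℂ → ℝ, Continuous F → HasCompactSupport F →
      Tendsto (fun n : ℕ => (∑ i ∈ Finset.range n, F (x i)) / n) atTop
        (nhds (∫ z, F z ∂ω))) :
    Tendsto (fun δ : ℝ =>
        Filter.limsup (fun n : ℕ =>
          ((-Real.log δ) / n) *
            (((Finset.range n).filter (fun i => ‖x i‖ ≤ δ)).card : ℝ))
          atTop)
      (nhdsWithin 0 (Set.Ioi 0)) (nhds 0) := by
  set g : ℝ → ℝ := fun δ =>
    Filter.limsup (fun n : ℕ =>
      ((-Real.log δ) / n) *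
        (((Finset.range n).filter (fun i => ‖x i‖ ≤ δ)).card : ℝ)) atTop with hg
  have key : ∀ δ : ℝ, 0 < δ → δ < 1 →
      0 ≤ g δ ∧ g δ ≤ (-Real.log δ) * (C * (2 * δ) ^ α) := by
    intro δ hδ hδ1
    have hlog : 0 ≤ -Real.log δ := by
      have := Real.log_nonpos hδ.le hδ1.le
      linarith
    set F : ℂ → ℝ := fun z => max 0 (min 1 (2 - ‖z‖ / δ)) with hF
    have hFc : Continuous F := by
      apply Continuous.max continuous_const
      apply Continuous.min continuous_const
      exact continuous_const.sub (continuous_norm.div_const δ)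
    have hFsupp : HasCompactSupport F := by
      apply HasCompactSupport.intro (isCompact_closedBall (0 : ℂ) (2 * δ))
      intro z hz
      have hz' : 2 * δ < ‖z‖ := by
        simpa [Complex.dist_eq] using hz
      have h1 : 2 - ‖z‖ / δ ≤ 0 := by
        rw [sub_nonpos, le_div_iff₀ hδ]; nlinarith
      have : min 1 (2 - ‖z‖ / δ) ≤ 0 := le_trans (min_le_right _ _) h1
      simp [hF, max_eq_left this]
    have hF0 : ∀ z, 0 ≤ F z := fun z => le_max_left _ _
    have hF1 : ∀ z, ‖z‖ ≤ δ → F z = 1 := by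
      intro z hz
      have h1 : (1 : ℝ) ≤ 2 - ‖z‖ / δ := by
        have : ‖z‖ / δ ≤ 1 := (div_le_one hδ).mpr hz
        linarith
      simp [hF, min_eq_left h1]
    have hFle : ∀ z, F z ≤ Set.indicator (ball (0 : ℂ) (2 * δ)) 1 z := by
      intro z
      by_cases hz : z ∈ ball (0 : ℂ) (2 * δ)
      · rw [Set.indicator_of_mem hz]
        simp only [Pi.one_apply]
        exact max_le (by norm_num) (min_le_left _ _)
      · rw [Set.indicator_of_notMem hz]
        have hz' : 2 * δ ≤ ‖z‖ := by
          simpa [Complex.dist_eq, not_lt] using hz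
        have h1 : 2 - ‖z‖ / δ ≤ 0 := by
          rw [sub_nonpos, le_div_iff₀ hδ]; nlinarith
        have : min 1 (2 - ‖z‖ / δ) ≤ 0 := le_trans (min_le_right _ _) h1
        simp [hF, max_eq_left this]
    have hFint : Integrable F ω := hFc.integrable_of_hasCompactSupport hFsupp
    -- integral bound
    have hIle : ∫ z, F z ∂ω ≤ C * (2 * δ) ^ α := by
      have hmeas : MeasurableSet (ball (0 : ℂ) (2 * δ)) := measurableSet_ball
      have hindint : Integrable (Set.indicator (ball (0 : ℂ) (2 * δ)) (1 : ℂ → ℝ)) ω := by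
        apply Integrable.indicator _ hmeas
        exact integrable_const 1
      have h1 : ∫ z, F z ∂ω ≤ ∫ z, Set.indicator (ball (0 : ℂ) (2 * δ)) 1 z ∂ω :=
        integral_mono hFint hindint hFle
      have h2 : ∫ z, Set.indicator (ball (0 : ℂ) (2 * δ)) 1 z ∂ω
          = (ω (ball (0 : ℂ) (2 * δ))).toReal := integral_indicator_one hmeas
      have h3 : (ω (ball (0 : ℂ) (2 * δ))).toReal ≤ C * (2 * δ) ^ α := by
        have := hHolder (2 * δ) (by linarith)
        have h4 := ENNReal.toReal_mono (by simp) this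
        rwa [ENNReal.toReal_ofReal (by positivity)] at h4
      linarith
    -- pointwise bound between sequences
    set a : ℕ → ℝ := fun n =>
      ((-Real.log δ) / n) *
        (((Finset.range n).filter (fun i => ‖x i‖ ≤ δ)).card : ℝ) with ha
    set b : ℕ → ℝ := fun n =>
      (-Real.log δ) * ((∑ i ∈ Finset.range n, F (x i)) / n) with hb
    have hab : ∀ n, a n ≤ b n := by
      intro n
      have hcard : (((Finset.range n).filter (fun i => ‖x i‖ ≤ δ)).card : ℝ)
          ≤ ∑ i ∈ Finset.range n, F (x i) := by
        calc (((Finset.range n).filter (fun i => ‖x i‖ ≤ δ)).card : ℝ)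
            = ∑ i ∈ (Finset.range n).filter (fun i => ‖x i‖ ≤ δ), 1 := by simp
          _ = ∑ i ∈ (Finset.range n).filter (fun i => ‖x i‖ ≤ δ), F (x i) := by
              apply Finset.sum_congr rfl
              intro i hi
              rw [hF1 (x i) (Finset.mem_filter.mp hi).2]
          _ ≤ ∑ i ∈ Finset.range n, F (x i) :=
              Finset.sum_le_sum_of_subset_of_nonneg (Finset.filter_subset _ _)
                (fun i _ _ => hF0 (x i))
      have hnn : (0 : ℝ) ≤ (-Real.log δ) / n := by positivity
      have := mul_le_mul_of_nonneg_left hcard hnn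
      calc a n ≤ ((-Real.log δ) / n) * (∑ i ∈ Finset.range n, F (x i)) := this
        _ = b n := by rw [hb]; ring
    have ha0 : ∀ n, 0 ≤ a n := by
      intro n; apply mul_nonneg (by positivity) (by positivity)
    have hbtend : Tendsto b atTop (nhds ((-Real.log δ) * ∫ z, F z ∂ω)) :=
      (htyp F hFc hFsupp).const_mul _
    have hbbd : IsBoundedUnder (· ≤ ·) atTop b := hbtend.isBoundedUnder_le
    have habd : IsBoundedUnder (· ≤ ·) atTop a :=
      hbbd.mono_le (Eventually.of_forall hab)
    constructor
    · exact le_limsup_of_frequently_le (Frequently.of_forall ha0) habd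
    · have h1 : g δ ≤ Filter.limsup b atTop := by
        apply limsup_le_limsup (Eventually.of_forall hab)
          (isCoboundedUnder_le_of_le atTop ha0) hbbd
      have h2 : Filter.limsup b atTop = (-Real.log δ) * ∫ z, F z ∂ω := hbtend.limsup_eq
      have h3 : (-Real.log δ) * ∫ z, F z ∂ω ≤ (-Real.log δ) * (C * (2 * δ) ^ α) :=
        mul_le_mul_of_nonneg_left hIle hlog
      linarith [h1.trans_eq h2]
  -- upper bound function tends to 0
  have hupper : Tendsto (fun δ : ℝ => (-Real.log δ) * (C * (2 * δ) ^ α))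
      (nhdsWithin 0 (Set.Ioi 0)) (nhds 0) := by
    have h1 : Tendsto (fun δ : ℝ => (-(C * 2 ^ α)) * (Real.log δ * δ ^ α))
        (nhdsWithin 0 (Set.Ioi 0)) (nhds 0) := by
      have := (tendsto_log_mul_rpow_nhdsGT_zero hα).const_mul (-(C * 2 ^ α))
      simpa using this
    apply h1.congr'
    filter_upwards [self_mem_nhdsWithin] with δ (hδ : (0 : ℝ) < δ)
    rw [Real.mul_rpow (by norm_num) hδ.le]
    ring
  apply tendsto_of_tendsto_of_tendsto_of_le_of_le' tendsto_const_nhds hupper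
  · filter_upwards [Ioo_mem_nhdsGT_of_mem (Set.mem_Ico.mpr ⟨le_refl 0, one_pos⟩)] with δ hδ
    exact (key δ hδ.1 hδ.2).1
  · filter_upwards [Ioo_mem_nhdsGT_of_mem (Set.mem_Ico.mpr ⟨le_refl 0, one_pos⟩)] with δ hδ
    exact (key δ hδ.1 hδ.2).2
end
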